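/- The map f sending σ ↦ (σ \ {46(r+6)}) ⊖ 1 is a bijection from Δ^3_1 = {σ ∈ A_r^{1,3} : C_{σ\{4,6,r+6\}} = {1,2,3,4}} onto A_{r-1}^{1,3} viewed as a subset of N(S_{3,r}) via C_τ = {1,2,3,r+6}, for r > 2. -/
import Mathlib


open Finset

namespace KG

/-- The ground set `[k+6] = {1, …, k+6}`. -/
def ground (k : ℕ) : Finset ℕ := Finset.Icc 1 (k + 6)

/-- Cyclic shift of an element of `[k+6]` by `j` (mod `k+6`), with representatives in `[k+6]`. -/
def shiftElem (k j x : ℕ) : ℕ := (x - 1 + j) % (k + 6) + 1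

/-- `σ ⊕ j`: shift every element by `j` modulo `k+6`. -/
def shift (k j : ℕ) (α : Finset ℕ) : Finset ℕ := α.image (shiftElem k j)

/-- A vertex of `KG_{3,k}`: a 3-element subset of `[k+6]`. -/
def IsVertex (k : ℕ) (α : Finset ℕ) : Prop := α ⊆ ground k ∧ α.card = 3

/-- A set is stable if it contains no two cyclically consecutive elements mod `k+6`. -/
def Stable (k : ℕ) (α : Finset ℕ) : Prop := ∀ t ∈ α, shiftElem k 1 t ∉ α

/-- Adjacency in the Kneser graph `KG_{3,k}`: disjoint 3-subsets of `[k+6]`. -/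
def AdjKG (k : ℕ) (α β : Finset ℕ) : Prop := IsVertex k α ∧ IsVertex k β ∧ Disjoint α β

/-- Adjacency in `S_{3,k}`: adjacency in `KG_{3,k}` with at least one stable endpoint. -/
def AdjS (k : ℕ) (α β : Finset ℕ) : Prop := AdjKG k α β ∧ (Stable k α ∨ Stable k β)

/-- A simplex of the neighborhood complex `N(KG_{3,k})`. -/
def SimplexKG (k : ℕ) (σ : Finset (Finset ℕ)) : Prop :=
  σ.Nonempty ∧ ∃ u, ∀ v ∈ σ, AdjKG k u v

/-- A simplex of the neighborhood complex `N(S_{3,k})`. -/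
def SimplexS (k : ℕ) (σ : Finset (Finset ℕ)) : Prop :=
  σ.Nonempty ∧ ∃ u, ∀ v ∈ σ, AdjS k u v

/-- A simplex of the neighborhood complex `N(SG_{3,k})` of the stable Kneser graph. -/
def SimplexSG (k : ℕ) (σ : Finset (Finset ℕ)) : Prop :=
  σ.Nonempty ∧ (∀ v ∈ σ, Stable k v) ∧ ∃ u, Stable k u ∧ ∀ v ∈ σ, AdjKG k u v

/-- `C_σ = [k+6] \ ⋃ σ`. -/
def Csets (k : ℕ) (σ : Finset (Finset ℕ)) : Finset ℕ := ground k \ σ.sup id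

/-- Lexicographic (strict) order on finsets of naturals via their sorted lists. -/
def lexLt (a b : Finset ℕ) : Prop :=
  List.Lex (· < ·) (a.sort (· ≤ ·)) (b.sort (· ≤ ·))

/-- The index set `J_s`. -/
def Jset (k s : ℕ) : Finset ℕ :=
  if s = 1 then Finset.Icc 3 (k + 5)
  else if 1 < s ∧ s < k + 5 then Finset.Icc (s + 2) (k + 6)
  else ∅

end KG

namespace KG

/-- `σ ⊕ j` for a simplex: shift every 3-set in `σ` by `j` mod `k+6`. -/
def shiftSimp (k j : ℕ) (σ : Finset (Finset ℕ)) : Finset (Finset ℕ) :=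
  σ.image (shift k j)

end KG


namespace KG

lemma mem_ground_iff {k x : ℕ} : x ∈ ground k ↔ 1 ≤ x ∧ x ≤ k + 6 := by
  simp [ground]

lemma shiftElem_mem_ground (k j x : ℕ) : shiftElem k j x ∈ ground k := by
  have := Nat.mod_lt (x - 1 + j) (y := k + 6) (by omega)
  simp [shiftElem, mem_ground_iff]; omega

lemma shiftElem_comp (k i j x : ℕ) :
    shiftElem k i (shiftElem k j x) = shiftElem k (j + i) x := by
  unfold shiftElem
  rw [Nat.add_sub_cancel, Nat.mod_add_mod]
  congr 2
  omega

lemma shiftElem_zero {k m x : ℕ} (hm : m % (k + 6) = 0) (hx : x ∈ ground k) :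
    shiftElem k m x = x := by
  obtain ⟨c, rfl⟩ := Nat.dvd_of_mod_eq_zero hm
  rw [mem_ground_iff] at hx
  unfold shiftElem
  rw [Nat.add_mul_mod_self_left, Nat.mod_eq_of_lt (by omega)]
  omega

lemma shiftElem_inj (k j : ℕ) {x y : ℕ} (hx : x ∈ ground k) (hy : y ∈ ground k)
    (h : shiftElem k j x = shiftElem k j y) : x = y := by
  rw [mem_ground_iff] at hx hy
  unfold shiftElem at h
  have h' : (x - 1 + j) % (k + 6) = (y - 1 + j) % (k + 6) := by omega
  have h2 : x - 1 ≡ y - 1 [MOD k + 6] := Nat.ModEq.add_right_cancel' j h'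
  unfold Nat.ModEq at h2
  rw [Nat.mod_eq_of_lt (by omega), Nat.mod_eq_of_lt (by omega)] at h2
  omega

lemma shiftElem_surj (k j : ℕ) {x : ℕ} (hx : x ∈ ground k) :
    ∃ y ∈ ground k, shiftElem k j y = x := by
  refine ⟨shiftElem k (k + 6 - j % (k + 6)) x, shiftElem_mem_ground _ _ _, ?_⟩
  rw [shiftElem_comp]
  apply shiftElem_zero _ hx
  have hqs := Nat.div_add_mod j (k + 6)
  have hs : j % (k + 6) < k + 6 := Nat.mod_lt _ (by omega)
  have h : k + 6 - j % (k + 6) + j = (k + 6) * (j / (k + 6) + 1) := by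
    rw [Nat.mul_add, Nat.mul_one]; omega
  rw [h, Nat.mul_mod_right]

lemma shift_subset_ground (k j : ℕ) (α : Finset ℕ) : shift k j α ⊆ ground k := by
  intro x hx
  simp only [shift, mem_image] at hx
  obtain ⟨y, _, rfl⟩ := hx
  exact shiftElem_mem_ground k j y

lemma card_shift {k j : ℕ} {α : Finset ℕ} (hα : α ⊆ ground k) :
    (shift k j α).card = α.card :=
  Finset.card_image_of_injOn fun a ha b hb h => shiftElem_inj k j (hα ha) (hα hb) h

lemma isVertex_shift {k j : ℕ} {α : Finset ℕ} (h : IsVertex k α) :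
    IsVertex k (shift k j α) :=
  ⟨shift_subset_ground k j α, by rw [card_shift h.1]; exact h.2⟩

lemma stable_shift {k j : ℕ} {α : Finset ℕ} (hα : α ⊆ ground k) (h : Stable k α) :
    Stable k (shift k j α) := by
  intro t ht hmem
  simp only [shift, mem_image] at ht hmem
  obtain ⟨a, ha, rfl⟩ := ht
  obtain ⟨b, hb, hb2⟩ := hmem
  rw [shiftElem_comp] at hb2
  have hcomm : shiftElem k j (shiftElem k 1 a) = shiftElem k (j + 1) a := by
    rw [shiftElem_comp, Nat.add_comm]
  have hb' : shiftElem k j b = shiftElem k j (shiftElem k 1 a) := by rw [hcomm, hb2]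
  have := shiftElem_inj k j (hα hb) (shiftElem_mem_ground k 1 a) hb'
  exact h a ha (this ▸ hb)

lemma shift_cancel {k j j' : ℕ} (h0 : (j + j') % (k + 6) = 0) {α : Finset ℕ}
    (hα : α ⊆ ground k) : shift k j' (shift k j α) = α := by
  unfold shift
  rw [Finset.image_image]
  rw [Finset.image_congr (g := id)]
  · exact Finset.image_id
  · intro x hx
    simp only [Function.comp_apply, id_eq]
    rw [shiftElem_comp]
    exact shiftElem_zero h0 (hα hx)

lemma shiftSimp_cancel {k j j' : ℕ} (h0 : (j + j') % (k + 6) = 0)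
    {σ : Finset (Finset ℕ)} (hσ : ∀ v ∈ σ, v ⊆ ground k) :
    shiftSimp k j' (shiftSimp k j σ) = σ := by
  unfold shiftSimp
  rw [Finset.image_image]
  rw [Finset.image_congr (g := id)]
  · exact Finset.image_id
  · intro v hv
    simp only [Function.comp_apply, id_eq]
    exact shift_cancel h0 (hσ v hv)

lemma Csets_shiftSimp {k j : ℕ} {σ : Finset (Finset ℕ)} (hσ : ∀ v ∈ σ, v ⊆ ground k) :
    Csets k (shiftSimp k j σ) = shift k j (Csets k σ) := by
  ext x
  simp only [Csets, mem_sdiff, shift, mem_image]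
  constructor
  · rintro ⟨hxg, hns⟩
    obtain ⟨y, hyg, rfl⟩ := shiftElem_surj k j hxg
    have hy : y ∉ σ.sup id := by
      intro hsup
      obtain ⟨v, hv, hyv⟩ := Finset.mem_sup.mp hsup
      apply hns
      apply Finset.mem_sup.mpr
      exact ⟨shift k j v, Finset.mem_image_of_mem _ hv, Finset.mem_image_of_mem _ hyv⟩
    exact ⟨y, ⟨hyg, hy⟩, rfl⟩
  · rintro ⟨y, ⟨hyg, hy⟩, rfl⟩
    refine ⟨shiftElem_mem_ground k j y, fun hsup => ?_⟩
    obtain ⟨w, hw, hxw⟩ := Finset.mem_sup.mp hsup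
    simp only [shiftSimp, mem_image] at hw
    obtain ⟨v, hv, rfl⟩ := hw
    simp only [id_eq, shift, mem_image] at hxw
    obtain ⟨z, hzv, hz⟩ := hxw
    have : z = y := shiftElem_inj k j (hσ v hv hzv) hyg hz
    exact hy (Finset.mem_sup.mpr ⟨v, hv, this ▸ hzv⟩)

lemma Csets_insert {k : ℕ} (a : Finset ℕ) (σ : Finset (Finset ℕ)) :
    Csets k (insert a σ) = Csets k σ \ a := by
  unfold Csets
  rw [Finset.sup_insert]
  ext x
  simp only [mem_sdiff, id_eq, Finset.sup_eq_union, mem_union]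
  tauto

lemma disjoint_csets {k : ℕ} {σ : Finset (Finset ℕ)} {v : Finset ℕ} (hv : v ∈ σ) :
    Disjoint (Csets k σ) v := by
  rw [Finset.disjoint_left]
  intro x hx hxv
  simp only [Csets, mem_sdiff] at hx
  exact hx.2 (Finset.mem_sup.mpr ⟨v, hv, hxv⟩)

lemma all_stable_of_csets {k : ℕ} {σ : Finset (Finset ℕ)} (hσ : SimplexS k σ)
    (hC : ∀ u : Finset ℕ, u ⊆ Csets k σ → u.card = 3 → ¬ Stable k u) :
    ∀ v ∈ σ, Stable k v := by
  obtain ⟨⟨v₀, hv₀⟩, u, hu⟩ := hσ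
  have hvert : IsVertex k u := (hu v₀ hv₀).1.1
  have husub : u ⊆ Csets k σ := by
    intro x hx
    simp only [Csets, mem_sdiff]
    refine ⟨hvert.1 hx, fun hsup => ?_⟩
    obtain ⟨v, hv, hxv⟩ := Finset.mem_sup.mp hsup
    exact (Finset.disjoint_left.mp (hu v hv).1.2.2 hx) hxv
  intro v hv
  rcases (hu v hv).2 with h | h
  · exact absurd h (hC u husub hvert.2)
  · exact h

lemma shiftElem_one {k x : ℕ} (h1 : 1 ≤ x) (h2 : x < k + 6) : shiftElem k 1 x = x + 1 := by
  unfold shiftElem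
  rw [Nat.mod_eq_of_lt (by omega)]
  omega

lemma shiftElem_one_top (k : ℕ) : shiftElem k 1 (k + 6) = 1 := by
  unfold shiftElem
  have : k + 6 - 1 + 1 = k + 6 := by omega
  rw [this, Nat.mod_self]

lemma shiftElem_back {k x : ℕ} (h1 : 2 ≤ x) (h2 : x ≤ k + 6) :
    shiftElem k (k + 5) x = x - 1 := by
  unfold shiftElem
  rw [Nat.mod_eq_sub_mod (by omega), Nat.mod_eq_of_lt (by omega)]
  omega

lemma shiftElem_back_one (k : ℕ) : shiftElem k (k + 5) 1 = k + 6 := by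
  unfold shiftElem
  rw [Nat.mod_eq_of_lt (by omega)]
  omega

lemma not_stable_123 (k : ℕ) : ¬ Stable k {1, 2, 3} := by
  intro h
  have h1 : (1 : ℕ) ∈ ({1, 2, 3} : Finset ℕ) := by simp
  have := h 1 h1
  rw [shiftElem_one (by omega) (by omega)] at this
  simp at this

lemma all_stable_A {k : ℕ} {σ : Finset (Finset ℕ)} (hσ : SimplexS k σ)
    (hC : Csets k σ = {1, 2, 3}) : ∀ v ∈ σ, Stable k v := by
  apply all_stable_of_csets hσ
  intro u hsub hcard
  rw [hC] at hsub
  have hc3 : ({1, 2, 3} : Finset ℕ).card = 3 := by decide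
  have : u = {1, 2, 3} := Finset.eq_of_subset_of_card_le hsub (by omega)
  rw [this]
  exact not_stable_123 k

lemma all_stable_B {k : ℕ} {σ : Finset (Finset ℕ)} (hσ : SimplexS k σ)
    (hC : Csets k σ = {1, 2, 3, k + 6}) : ∀ v ∈ σ, Stable k v := by
  apply all_stable_of_csets hσ
  intro u hsub hcard hst
  rw [hC] at hsub
  have h12 : 1 ∈ u → 2 ∉ u := by
    intro h1
    have := hst 1 h1
    rwa [shiftElem_one (by omega) (by omega)] at this
  have h23 : 2 ∈ u → 3 ∉ u := by
    intro h2
    have := hst 2 h2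
    rwa [shiftElem_one (by omega) (by omega)] at this
  have h41 : (k + 6) ∈ u → 1 ∉ u := by
    intro h4
    have := hst (k + 6) h4
    rwa [shiftElem_one_top] at this
  have hmem : ∀ x ∈ u, x = 1 ∨ x = 2 ∨ x = 3 ∨ x = k + 6 := by
    intro x hx
    have := hsub hx
    simpa using this
  by_cases h2 : 2 ∈ u
  · have h1 : 1 ∉ u := fun h1 => h12 h1 h2
    have h3 : 3 ∉ u := h23 h2
    have hsub2 : u ⊆ {2, k + 6} := by
      intro x hx
      rcases hmem x hx with rfl | rfl | rfl | rfl
      · exact absurd hx h1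
      · simp
      · exact absurd hx h3
      · simp
    have hle := Finset.card_le_card hsub2
    have : ({2, k + 6} : Finset ℕ).card ≤ 2 := by
      apply le_trans (Finset.card_insert_le _ _); simp
    omega
  · by_cases h1 : 1 ∈ u
    · have h4 : k + 6 ∉ u := fun h4 => h41 h4 h1
      have hsub2 : u ⊆ {1, 3} := by
        intro x hx
        rcases hmem x hx with rfl | rfl | rfl | rfl
        · simp
        · exact absurd hx h2
        · simp
        · exact absurd hx h4
      have hle := Finset.card_le_card hsub2
      have : ({1, 3} : Finset ℕ).card ≤ 2 := by
        apply le_trans (Finset.card_insert_le _ _); simp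
      omega
    · have hsub2 : u ⊆ {3, k + 6} := by
        intro x hx
        rcases hmem x hx with rfl | rfl | rfl | rfl
        · exact absurd hx h1
        · exact absurd hx h2
        · simp
        · simp
      have hle := Finset.card_le_card hsub2
      have : ({3, k + 6} : Finset ℕ).card ≤ 2 := by
        apply le_trans (Finset.card_insert_le _ _); simp
      omega

lemma shift_back_1234 (k : ℕ) :
    shift k (k + 5) {1, 2, 3, 4} = {1, 2, 3, k + 6} := by
  unfold shift
  rw [Finset.image_insert, Finset.image_insert, Finset.image_insert, Finset.image_singleton]
  rw [shiftElem_back_one, shiftElem_back (by omega) (by omega),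
      shiftElem_back (by omega) (by omega), shiftElem_back (by omega) (by omega)]
  ext x
  simp
  omega

lemma shift_fwd_123top (k : ℕ) :
    shift k 1 {1, 2, 3, k + 6} = {1, 2, 3, 4} := by
  unfold shift
  rw [Finset.image_insert, Finset.image_insert, Finset.image_insert, Finset.image_singleton]
  rw [shiftElem_one (by omega) (by omega), shiftElem_one (by omega) (by omega),
      shiftElem_one (by omega) (by omega), shiftElem_one_top]
  ext x
  simp
  omega

lemma isVertex_123 {k : ℕ} : IsVertex k {1, 2, 3} := by
  constructor
  · intro x hx
    rw [mem_ground_iff]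
    simp at hx
    omega
  · decide

end KG

/-- `σ ↦ (σ \\ {4,6,r+6}) ⊖ 1` is a bijection from
`Δ³₁ = {σ ∈ A_r^{1,3} : C_{σ \\ {4,6,r+6}} = {1,2,3,4}}` onto `A_{r-1}^{1,3}`
viewed inside `N(S_{3,r})` as `{τ : C_τ = {1,2,3,r+6}}`, for `r > 2`.
(Here `⊖ 1` is the shift by `r+5 ≡ -1 (mod r+6)`.) -/
theorem stmt_11 (r : ℕ) (hr : 2 < r) :
    Set.BijOn (fun σ => KG.shiftSimp r (r + 5) (σ.erase {4, 6, r + 6}))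
      {σ : Finset (Finset ℕ) | KG.SimplexS r σ ∧ KG.Csets r σ = {1, 2, 3} ∧
        KG.Csets r (σ.erase {4, 6, r + 6}) = {1, 2, 3, 4}}
      {τ : Finset (Finset ℕ) | KG.SimplexS r τ ∧ KG.Csets r τ = {1, 2, 3, r + 6}} := by
  have h0 : (r + 5 + 1) % (r + 6) = 0 := by
    have h : r + 5 + 1 = r + 6 := by omega
    rw [h, Nat.mod_self]
  have h0' : (1 + (r + 5)) % (r + 6) = 0 := by
    have h : 1 + (r + 5) = r + 6 := by omega
    rw [h, Nat.mod_self]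
  refine ⟨?_, ?_, ?_⟩
  · -- MapsTo
    rintro σ ⟨hS, hC, hC'⟩
    obtain ⟨hne, u, hu⟩ := hS
    have hground : ∀ v ∈ σ, v ⊆ KG.ground r := fun v hv => ((hu v hv).1.2.1).1
    have hstab : ∀ v ∈ σ, KG.Stable r v := KG.all_stable_A ⟨hne, u, hu⟩ hC
    have hground' : ∀ v ∈ σ.erase {4, 6, r + 6}, v ⊆ KG.ground r :=
      fun v hv => hground v (Finset.mem_of_mem_erase hv)
    have hCs : KG.Csets r (KG.shiftSimp r (r + 5) (σ.erase {4, 6, r + 6}))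
        = {1, 2, 3, r + 6} := by
      rw [KG.Csets_shiftSimp hground', hC', KG.shift_back_1234]
    refine ⟨⟨?_, ?_⟩, hCs⟩
    · -- nonempty
      have hne' : (σ.erase {4, 6, r + 6}).Nonempty := by
        rw [Finset.nonempty_iff_ne_empty]
        intro h
        rw [h] at hC'
        have h5 : (5 : ℕ) ∈ KG.Csets r (∅ : Finset (Finset ℕ)) := by
          simp [KG.Csets, KG.ground]
        rw [hC'] at h5
        simp at h5
      exact hne'.image _
    · -- witness
      refine ⟨{1, 2, 3}, ?_⟩
      intro w hw
      simp only [KG.shiftSimp, Finset.mem_image] at hw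
      obtain ⟨v, hv, rfl⟩ := hw
      have hvmem : v ∈ σ := Finset.mem_of_mem_erase hv
      have hvV : KG.IsVertex r v := (hu v hvmem).1.2.1
      refine ⟨⟨KG.isVertex_123, KG.isVertex_shift hvV, ?_⟩,
        Or.inr (KG.stable_shift (hground' v hv) (hstab v hvmem))⟩
      have hsub : ({1, 2, 3} : Finset ℕ)
          ⊆ KG.Csets r (KG.shiftSimp r (r + 5) (σ.erase {4, 6, r + 6})) := by
        rw [hCs]
        intro x hx
        simp at hx ⊢
        omega
      exact Finset.disjoint_of_subset_left hsub
        (KG.disjoint_csets (Finset.mem_image_of_mem _ hv))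
  · -- InjOn
    rintro σ₁ ⟨hS₁, hC₁, hC₁'⟩ σ₂ ⟨hS₂, hC₂, hC₂'⟩ heq
    simp only at heq
    obtain ⟨hne₁, u₁, hu₁⟩ := hS₁
    obtain ⟨hne₂, u₂, hu₂⟩ := hS₂
    have hg₁ : ∀ v ∈ σ₁.erase {4, 6, r + 6}, v ⊆ KG.ground r :=
      fun v hv => ((hu₁ v (Finset.mem_of_mem_erase hv)).1.2.1).1
    have hg₂ : ∀ v ∈ σ₂.erase {4, 6, r + 6}, v ⊆ KG.ground r :=
      fun v hv => ((hu₂ v (Finset.mem_of_mem_erase hv)).1.2.1).1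
    have hm₁ : ({4, 6, r + 6} : Finset ℕ) ∈ σ₁ := by
      by_contra h
      rw [Finset.erase_eq_of_notMem h, hC₁] at hC₁'
      have h4 : (4 : ℕ) ∈ ({1, 2, 3, 4} : Finset ℕ) := by simp
      rw [← hC₁'] at h4
      simp at h4
    have hm₂ : ({4, 6, r + 6} : Finset ℕ) ∈ σ₂ := by
      by_contra h
      rw [Finset.erase_eq_of_notMem h, hC₂] at hC₂'
      have h4 : (4 : ℕ) ∈ ({1, 2, 3, 4} : Finset ℕ) := by simp
      rw [← hC₂'] at h4
      simp at h4
    have he : σ₁.erase {4, 6, r + 6} = σ₂.erase {4, 6, r + 6} := by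
      have h := congrArg (KG.shiftSimp r 1) heq
      rwa [KG.shiftSimp_cancel h0 hg₁, KG.shiftSimp_cancel h0 hg₂] at h
    rw [← Finset.insert_erase hm₁, ← Finset.insert_erase hm₂, he]
  · -- SurjOn
    rintro τ ⟨hSτ, hCτ⟩
    obtain ⟨hneτ, u, hu⟩ := hSτ
    have hgτ : ∀ v ∈ τ, v ⊆ KG.ground r := fun v hv => ((hu v hv).1.2.1).1
    have hsτ : ∀ v ∈ τ, KG.Stable r v := KG.all_stable_B ⟨hneτ, u, hu⟩ hCτ
    have hCτ' : KG.Csets r (KG.shiftSimp r 1 τ) = {1, 2, 3, 4} := by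
      rw [KG.Csets_shiftSimp hgτ, hCτ, KG.shift_fwd_123top]
    have hnm : ({4, 6, r + 6} : Finset ℕ) ∉ KG.shiftSimp r 1 τ := by
      intro h
      have h4 : (4 : ℕ) ∈ KG.Csets r (KG.shiftSimp r 1 τ) := by rw [hCτ']; simp
      exact (Finset.disjoint_left.mp (KG.disjoint_csets h) h4) (by simp)
    have herase : (insert {4, 6, r + 6} (KG.shiftSimp r 1 τ)).erase {4, 6, r + 6}
        = KG.shiftSimp r 1 τ := Finset.erase_insert hnm
    refine ⟨insert {4, 6, r + 6} (KG.shiftSimp r 1 τ), ⟨⟨?_, ?_, ?_⟩, ?_⟩⟩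
    · -- SimplexS
      refine ⟨Finset.insert_nonempty _ _, {1, 2, 3}, ?_⟩
      intro v hv
      rcases Finset.mem_insert.mp hv with rfl | hv'
      · -- v = {4, 6, r+6}
        have hvert : KG.IsVertex r ({4, 6, r + 6} : Finset ℕ) := by
          constructor
          · intro x hx
            rw [KG.mem_ground_iff]
            simp at hx
            omega
          · rw [Finset.card_insert_of_notMem (by simp),
              Finset.card_insert_of_notMem (by simp; omega), Finset.card_singleton]
        have hstb : KG.Stable r ({4, 6, r + 6} : Finset ℕ) := by
          intro t ht
          simp only [Finset.mem_insert, Finset.mem_singleton] at ht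
          rcases ht with rfl | rfl | rfl
          · rw [KG.shiftElem_one (by omega) (by omega)]
            simp
          · rw [KG.shiftElem_one (by omega) (by omega)]
            simp
            omega
          · rw [KG.shiftElem_one_top]
            simp
        refine ⟨⟨KG.isVertex_123, hvert, ?_⟩, Or.inr hstb⟩
        rw [Finset.disjoint_left]
        intro x hx hx'
        simp at hx hx'
        omega
      · -- v ∈ shiftSimp r 1 τ
        simp only [KG.shiftSimp, Finset.mem_image] at hv'
        obtain ⟨w, hw, rfl⟩ := hv'
        refine ⟨⟨KG.isVertex_123, KG.isVertex_shift (hu w hw).1.2.1, ?_⟩,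
          Or.inr (KG.stable_shift (hgτ w hw) (hsτ w hw))⟩
        have hsub : ({1, 2, 3} : Finset ℕ) ⊆ KG.Csets r (KG.shiftSimp r 1 τ) := by
          rw [hCτ']
          intro x hx
          simp at hx ⊢
          omega
        exact Finset.disjoint_of_subset_left hsub
          (KG.disjoint_csets (Finset.mem_image_of_mem _ hw))
    · -- Csets = {1,2,3}
      rw [KG.Csets_insert, hCτ']
      ext x
      simp
      omega
    · -- Csets of erase = {1,2,3,4}
      rw [herase, hCτ']
    · -- f σ = τ
      simp only
      rw [herase]
      exact KG.shiftSimp_cancel h0' hgτ
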